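/- Every unit disk graph admits a conflict-free 6-coloring. That is, if V is a finite set and p : V → ℝ², then the simple graph on V in which distinct u, v are adjacent if and only if the Euclidean distance between p(u) and p(v) is at most 2 admits a conflict-free 6-coloring. -/

import Mathlib

/-- A conflict-free coloring of `G` with `k` colors: a partial coloring
(uncolored vertices get `none`) such that every vertex has, in its closed
neighborhood, a colored vertex whose color occurs exactly once there. -/
def IsCFColoring {V : Type*} (G : SimpleGraph V) {k : ℕ} (χ : V → Option (Fin k)) : Prop :=
  ∀ v : V, ∃ u ∈ insert v (G.neighborSet v), (χ u).isSome ∧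
    ∀ w ∈ insert v (G.neighborSet v), χ w = χ u → w = u

/-- `G` admits a conflict-free coloring with `k` colors. -/
def HasCFColoring {V : Type*} (G : SimpleGraph V) (k : ℕ) : Prop :=
  ∃ χ : V → Option (Fin k), IsCFColoring G χ

/-- The unit disk graph on points `p`: distinct vertices are adjacent iff the
Euclidean distance of their points is at most 2 (the unit disks intersect). -/
def unitDiskGraph {V : Type*} (p : V → EuclideanSpace ℝ (Fin 2)) : SimpleGraph V where
  Adj u v := u ≠ v ∧ dist (p u) (p v) ≤ 2
  symm := by
    constructor
    intro u v ⟨h1, h2⟩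
    exact ⟨h1.symm, by rwa [dist_comm]⟩
  loopless := by
    constructor
    intro v ⟨h1, _⟩
    exact h1 rfl

/-!
Cut the plane into horizontal strips of height 6/5 and take a maximal set `S` of vertices in
which any two of the same strip are more than 2 apart. Two of them in one strip are then more
than 8/5 apart horizontally; color each by the residue of its strip mod 3 and by the parity of
its rank in the horizontal order of its strip. A neighbor of `v` lies at most two strips away,
so only `v`'s own strip contributes colors of `v`'s palette. Among the points of `S` in that
strip near `v`, the one horizontally closest to `v` has a unique color: another of the same
parity would leave a point of `S` strictly between them, and such a point is within horizontal
distance 2/5 of `v`, hence closer.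
-/

local notation "ℝ²" => EuclideanSpace ℝ (Fin 2)

theorem SimpleGraph.exists_isIndepSet_forall_exists_adj {V : Type*} [Finite V]
    (G : SimpleGraph V) :
    ∃ S : Set V, G.IsIndepSet S ∧ ∀ v ∉ S, ∃ s ∈ S, G.Adj s v := by
  obtain ⟨S, hS⟩ := Set.Finite.exists_maximal (s := {S : Set V | G.IsIndepSet S})
    (Set.toFinite _) ⟨∅, Set.pairwise_empty _⟩
  refine ⟨S, hS.prop, fun v hv => ?_⟩
  by_contra! h
  refine hv (hS.mem_of_prop_insert ?_)
  exact hS.prop.insert fun s hs _ => ⟨fun hvs => h s hs hvs.symm, h s hs⟩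

theorem Set.ncard_lt_eq_ncard_lt_add_one {ι α : Type*} [LinearOrder α] {T : Set ι}
    (hT : T.Finite) (f : ι → α) {a b : ι} (ha : a ∈ T) (hab : f a < f b)
    (h : ∀ t ∈ T, f a ≤ f t → f t < f b → t = a) :
    {t ∈ T | f t < f b}.ncard = {t ∈ T | f t < f a}.ncard + 1 := by
  have : {t ∈ T | f t < f b} = insert a {t ∈ T | f t < f a} := by
    ext t
    simp only [Set.mem_sep_iff, Set.mem_insert_iff]
    constructor
    · rintro ⟨ht, htb⟩
      rcases le_or_gt (f a) (f t) with hat | hta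
      · exact Or.inl (h t ht hat htb)
      · exact Or.inr ⟨ht, hta⟩
    · rintro (rfl | ⟨ht, hta⟩)
      · exact ⟨ha, hab⟩
      · exact ⟨ht, hta.trans hab⟩
  rw [this, Set.ncard_insert_of_notMem (by simp) (hT.subset fun _ ht => ht.1)]

theorem EuclideanSpace.dist_sq_eq_fin_two (x y : ℝ²) :
    dist x y ^ 2 = (x 0 - y 0) ^ 2 + (x 1 - y 1) ^ 2 := by
  simp [EuclideanSpace.dist_sq_eq, Fin.sum_univ_two, Real.dist_eq, sq_abs]

theorem eight_fifths_lt_abs_sub_of_two_lt_dist {x y : ℝ²} (hy : |x 1 - y 1| < 6 / 5)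
    (h : 2 < dist x y) : 8 / 5 < |x 0 - y 0| := by
  have hd := EuclideanSpace.dist_sq_eq_fin_two x y
  by_contra! hx
  nlinarith [sq_abs (x 0 - y 0), sq_abs (x 1 - y 1), abs_nonneg (x 0 - y 0),
    abs_nonneg (x 1 - y 1)]

theorem dist_le_two_of_abs_sub_lt {x y : ℝ²} (hx : |x 0 - y 0| < 2 / 5)
    (hy : |x 1 - y 1| < 6 / 5) : dist x y ≤ 2 := by
  have hd := EuclideanSpace.dist_sq_eq_fin_two x y
  nlinarith [sq_abs (x 0 - y 0), sq_abs (x 1 - y 1), abs_nonneg (x 0 - y 0),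
    abs_nonneg (x 1 - y 1), dist_nonneg (x := x) (y := y)]

theorem EuclideanSpace.abs_apply_sub_apply_le_dist (x y : ℝ²) (i : Fin 2) :
    |x i - y i| ≤ dist x y := by
  simpa [Real.dist_eq] using PiLp.dist_apply_le x y i

noncomputable def strip (x : ℝ²) : ℤ := ⌊5 * x 1 / 6⌋

theorem abs_sub_lt_of_strip_eq {x y : ℝ²} (h : strip x = strip y) : |x 1 - y 1| < 6 / 5 := by
  have := Int.abs_sub_lt_one_of_floor_eq_floor h
  rw [← sub_div, ← mul_sub, abs_div, abs_mul] at this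
  norm_num at this
  linarith

theorem strip_eq_of_dist_le_two_of_zmod_eq {x y : ℝ²} (h : dist x y ≤ 2)
    (h3 : (strip x : ZMod 3) = strip y) : strip x = strip y := by
  have hy := abs_le.mp ((EuclideanSpace.abs_apply_sub_apply_le_dist x y 1).trans h)
  have hxy : (strip x : ℝ) < strip y + 3 := by
    have := Int.floor_le (5 * x 1 / 6)
    have := Int.lt_floor_add_one (5 * y 1 / 6)
    unfold strip
    linarith
  have hyx : (strip y : ℝ) < strip x + 3 := by
    have := Int.floor_le (5 * y 1 / 6)
    have := Int.lt_floor_add_one (5 * x 1 / 6)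
    unfold strip
    linarith
  rw [ZMod.intCast_eq_intCast_iff_dvd_sub] at h3
  have : strip x < strip y + 3 := by exact_mod_cast hxy
  have : strip y < strip x + 3 := by exact_mod_cast hyx
  omega

theorem dist_le_two_and_closer_of_between {a t b v : ℝ²}
    (hat : 2 < dist a t) (htb : 2 < dist t b)
    (ha : strip a = strip t) (hb : strip t = strip b) (hv : strip v = strip t)
    (hxa : a 0 ≤ t 0) (hxb : t 0 ≤ b 0) (hva : dist v a ≤ 2) (hvb : dist v b ≤ 2) :
    dist v t ≤ 2 ∧ |t 0 - v 0| < |a 0 - v 0| ∧ |t 0 - v 0| < |b 0 - v 0| := by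
  have gap_a := eight_fifths_lt_abs_sub_of_two_lt_dist (abs_sub_lt_of_strip_eq ha) hat
  have gap_b := eight_fifths_lt_abs_sub_of_two_lt_dist (abs_sub_lt_of_strip_eq hb) htb
  rw [abs_of_nonpos (by linarith)] at gap_a gap_b
  have hxva := abs_le.mp ((EuclideanSpace.abs_apply_sub_apply_le_dist v a 0).trans hva)
  have hxvb := abs_le.mp ((EuclideanSpace.abs_apply_sub_apply_le_dist v b 0).trans hvb)
  have htv : |t 0 - v 0| < 2 / 5 := abs_lt.mpr ⟨by linarith, by linarith⟩
  refine ⟨dist_le_two_of_abs_sub_lt ?_ (abs_sub_lt_of_strip_eq hv), ?_, ?_⟩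
  · rwa [abs_sub_comm]
  · rw [abs_of_neg (a := a 0 - v 0) (by linarith)]; linarith [abs_lt.mp htv]
  · rw [abs_of_pos (a := b 0 - v 0) (by linarith)]; linarith [abs_lt.mp htv]

def sameStripGraph {V : Type*} (p : V → ℝ²) : SimpleGraph V where
  Adj u v := (unitDiskGraph p).Adj u v ∧ strip (p u) = strip (p v)
  symm := ⟨fun _ _ h => ⟨h.1.symm, h.2.symm⟩⟩
  loopless := ⟨fun _ h => h.1.ne rfl⟩

noncomputable section StripColoring

variable {V : Type*} (p : V → ℝ²) (S : Set V)

def stripPart (k : ℤ) : Set V := {s ∈ S | strip (p s) = k}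

def stripRank (v : V) : ℕ := {s ∈ stripPart p S (strip (p v)) | p s 0 < p v 0}.ncard

def stripNbhd (v : V) : Set V := {s ∈ stripPart p S (strip (p v)) | dist (p v) (p s) ≤ 2}

def paletteEquiv : ZMod 3 × ZMod 2 ≃ Fin 6 := Fintype.equivFinOfCardEq rfl

open Classical in
def stripColoring (v : V) : Option (Fin 6) :=
  if v ∈ S then some (paletteEquiv (strip (p v), stripRank p S v)) else none

variable {p S}

theorem mem_insert_neighborSet_unitDiskGraph {v w : V} :
    w ∈ insert v ((unitDiskGraph p).neighborSet v) ↔ dist (p v) (p w) ≤ 2 := by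
  rcases eq_or_ne w v with rfl | hwv
  · simp
  · simp [unitDiskGraph, hwv, hwv.symm]

theorem two_lt_dist_of_mem_stripPart (hS : (sameStripGraph p).IsIndepSet S) {k : ℤ} {a b : V}
    (ha : a ∈ stripPart p S k) (hb : b ∈ stripPart p S k) (hab : a ≠ b) :
    2 < dist (p a) (p b) := by
  by_contra! h
  exact hS ha.1 hb.1 hab ⟨⟨hab, h⟩, ha.2.trans hb.2.symm⟩

theorem stripRank_eq_add_one [Finite V] (hS : (sameStripGraph p).IsIndepSet S) {v a b m : V}
    (ha : a ∈ stripNbhd p S v) (hb : b ∈ stripNbhd p S v) (hab : p a 0 < p b 0)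
    (hm : m = a ∨ m = b)
    (hmin : ∀ u ∈ stripNbhd p S v, |p m 0 - p v 0| ≤ |p u 0 - p v 0|) :
    stripRank p S b = stripRank p S a + 1 := by
  obtain ⟨⟨haS, hak⟩, hva⟩ := ha
  obtain ⟨⟨hbS, hbk⟩, hvb⟩ := hb
  unfold stripRank
  rw [hak, hbk]
  refine Set.ncard_lt_eq_ncard_lt_add_one (Set.toFinite _) (fun s => p s 0) ⟨haS, hak⟩ hab ?_
  rintro t ⟨htS, htk⟩ hat htb
  by_contra hta
  have htb' : t ≠ b := by rintro rfl; exact lt_irrefl _ htb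
  obtain ⟨hvt, hta_closer, htb_closer⟩ := dist_le_two_and_closer_of_between
    (two_lt_dist_of_mem_stripPart hS ⟨haS, hak⟩ ⟨htS, htk⟩ (Ne.symm hta))
    (two_lt_dist_of_mem_stripPart hS ⟨htS, htk⟩ ⟨hbS, hbk⟩ htb')
    (hak.trans htk.symm) (htk.trans hbk.symm) htk.symm hat htb.le hva hvb
  have := hmin t ⟨⟨htS, htk⟩, hvt⟩
  rcases hm with rfl | rfl <;> linarith

theorem mem_and_eq_of_stripColoring_eq {m w : V} (hm : m ∈ S)
    (h : stripColoring p S w = stripColoring p S m) :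
    w ∈ S ∧ (strip (p w) : ZMod 3) = strip (p m) ∧
      (stripRank p S w : ZMod 2) = stripRank p S m := by
  by_cases hw : w ∈ S
  · simp only [stripColoring, hw, hm, if_true, Option.some.injEq,
      EmbeddingLike.apply_eq_iff_eq, Prod.mk.injEq] at h
    exact ⟨hw, h⟩
  · simp [stripColoring, hw, hm] at h

theorem isCFColoring_stripColoring [Finite V] (hS : (sameStripGraph p).IsIndepSet S)
    (hdom : ∀ v ∉ S, ∃ s ∈ S, (sameStripGraph p).Adj s v) :
    IsCFColoring (unitDiskGraph p) (stripColoring p S) := by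
  intro v
  have hne : (stripNbhd p S v).Nonempty := by
    by_cases hv : v ∈ S
    · exact ⟨v, ⟨hv, rfl⟩, by simp⟩
    · obtain ⟨s, hs, hsv, hk⟩ := hdom v hv
      exact ⟨s, ⟨hs, hk⟩, by rw [dist_comm]; exact hsv.2⟩
  obtain ⟨m, hm, hmin⟩ :=
    Set.exists_min_image (stripNbhd p S v) (fun s => |p s 0 - p v 0|) (Set.toFinite _) hne
  obtain ⟨⟨hmS, hmk⟩, hvm⟩ := hm
  refine ⟨m, mem_insert_neighborSet_unitDiskGraph.mpr hvm, by simp [stripColoring, hmS],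
    fun w hw hχ => ?_⟩
  obtain ⟨hwS, h3, h2⟩ := mem_and_eq_of_stripColoring_eq hmS hχ
  have hvw := mem_insert_neighborSet_unitDiskGraph.mp hw
  have hwk : strip (p w) = strip (p v) :=
    strip_eq_of_dist_le_two_of_zmod_eq (by rwa [dist_comm]) (by rwa [hmk] at h3)
  have hwin : w ∈ stripNbhd p S v := ⟨⟨hwS, hwk⟩, hvw⟩
  by_contra hwm
  rw [ZMod.natCast_eq_natCast_iff'] at h2
  rcases lt_trichotomy (p w 0) (p m 0) with hlt | heq | hgt
  · have := stripRank_eq_add_one hS hwin ⟨⟨hmS, hmk⟩, hvm⟩ hlt (Or.inr rfl) hmin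
    omega
  · have := eight_fifths_lt_abs_sub_of_two_lt_dist
      (abs_sub_lt_of_strip_eq (hwk.trans hmk.symm))
      (two_lt_dist_of_mem_stripPart hS ⟨hwS, hwk⟩ ⟨hmS, hmk⟩ hwm)
    simp only [heq, sub_self, abs_zero] at this
    linarith
  · have := stripRank_eq_add_one hS ⟨⟨hmS, hmk⟩, hvm⟩ hwin hgt (Or.inl rfl) hmin
    omega

end StripColoring

theorem stmt8 {V : Type*} [Fintype V] (p : V → EuclideanSpace ℝ (Fin 2)) :
    HasCFColoring (unitDiskGraph p) 6 := by
  obtain ⟨S, hS, hdom⟩ := (sameStripGraph p).exists_isIndepSet_forall_exists_adj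
  exact ⟨stripColoring p S, isCFColoring_stripColoring hS hdom⟩
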